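/- arXiv:2402.16672 — 3 statements merged into one kernel-verified Lean document; each statement's English description precedes it below -/
import Mathlib

section
/- If (f_s) is a well structured vector name of a point a in a compact metrizable space X (i.e., each f_s ∈ C(X;[0,1]), {a} = ⋂_s f_s⁻¹(1/2,∞), f_{s+1}⁻¹(1/4,∞) ⊆ f_s⁻¹(2/3,∞), and ‖f_s‖ ≤ 2/3 + 2^{-s}), and g ∈ C(X;[0,1]), then the following are equivalent: (1) there exists s with ‖f_s·(1−g)‖ < 1/3; (2) g(a) > 1/2; (3) ‖f_s·(1−g)‖ < 1/3 for all sufficiently large s. -/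
/-!
Every point of the closed sets `{f_s ≥ 1/3}` lies in `{f_{s-1} > 2/3}`, so these sets decrease and
their intersection is contained in `⋂ {f_s > 1/2} = {a}`; in particular `f_s a > 2/3` for all `s`.
If `g a > 1/2`, compactness puts `{f_s ≥ 1/3}` inside the open neighbourhood `{(2/3 + δ)(1 - g) < 1/3}`
of `a` for large `s`, and there `f_s (1 - g) ≤ ‖f_s‖ (1 - g) < 1/3`; off `{f_s ≥ 1/3}` the product is
below `1/3` trivially. Conversely `‖f_s (1 - g)‖ < 1/3` evaluated at `a` with `f_s a > 2/3` forces
`1 - g a < 1/2`.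
-/

open Set Filter

theorem Antitone.eventually_subset_of_iInter_subset {X : Type*} [TopologicalSpace X]
    [CompactSpace X] {E : ℕ → Set X} (hE : Antitone E) (hclosed : ∀ n, IsClosed (E n))
    {U : Set X} (hU : IsOpen U) (hsub : ⋂ n, E n ⊆ U) : ∀ᶠ n in atTop, E n ⊆ U := by
  obtain ⟨n, hn⟩ := exists_subset_nhds_of_isCompact' hE.directed_ge
    (fun n => (hclosed n).isCompact) hclosed fun x hx => hU.mem_nhds (hsub hx)
  exact eventually_atTop.2 ⟨n, fun m hm => (hE hm).trans hn⟩

namespace ContinuousMap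

variable {X : Type*} [TopologicalSpace X] [CompactSpace X]

theorem gt_half_of_norm_mul_one_sub_lt_third {f g : C(X, ℝ)} {x : X} (hfx : 2/3 < f x)
    (h : ‖f * (1 - g)‖ < 1/3) : 1/2 < g x := by
  have hx : f x * (1 - g x) < 1/3 := calc
    f x * (1 - g x) ≤ ‖(f * (1 - g)) x‖ := by simpa using le_abs_self (f x * (1 - g x))
    _ ≤ ‖f * (1 - g)‖ := norm_coe_le_norm _ x
    _ < 1/3 := h
  by_contra! hg
  nlinarith

theorem norm_mul_one_sub_lt {f g : C(X, ℝ)} {c r : ℝ} (hr : 0 < r) (hf : ∀ x, 0 ≤ f x)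
    (hfc : ‖f‖ ≤ c) (hg : ∀ x, g x ∈ Icc (0:ℝ) 1) (hlarge : ∀ x, r ≤ f x → c * (1 - g x) < r) :
    ‖f * (1 - g)‖ < r := by
  refine (norm_lt_iff _ hr).2 fun x => ?_
  obtain ⟨hg0, hg1⟩ := hg x
  have hfx : f x ≤ c := (le_abs_self _).trans ((norm_coe_le_norm f x).trans hfc)
  have hprod : 0 ≤ f x * (1 - g x) := mul_nonneg (hf x) (by linarith)
  simp only [mul_apply, sub_apply, one_apply, Real.norm_eq_abs, abs_of_nonneg hprod]
  rcases lt_or_ge (f x) r with hsmall | hbig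
  · nlinarith [mul_nonneg (hf x) hg0]
  · exact (mul_le_mul_of_nonneg_right hfx (by linarith)).trans_lt (hlarge x hbig)

end ContinuousMap

section VectorName

variable {X : Type*} [TopologicalSpace X] {f : ℕ → C(X, ℝ)} {a : X}

theorem two_thirds_lt_apply_of_vectorName
    (hname : ({a} : Set X) = ⋂ s, (f s) ⁻¹' Ioi (1/2 : ℝ))
    (hnest : ∀ s, (f (s+1)) ⁻¹' Ioi (1/4 : ℝ) ⊆ (f s) ⁻¹' Ioi (2/3 : ℝ)) (s : ℕ) :
    2/3 < f s a := by
  have ha : a ∈ ⋂ s, (f s) ⁻¹' Ioi (1/2 : ℝ) := hname ▸ rfl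
  have : 1/2 < f (s+1) a := mem_iInter.1 ha (s+1)
  exact hnest s (show 1/4 < f (s+1) a by linarith)

theorem antitone_preimage_Ici_third
    (hnest : ∀ s, (f (s+1)) ⁻¹' Ioi (1/4 : ℝ) ⊆ (f s) ⁻¹' Ioi (2/3 : ℝ)) :
    Antitone fun s => (f s) ⁻¹' Ici (1/3 : ℝ) := by
  refine antitone_nat_of_succ_le fun s x (hx : 1/3 ≤ f (s+1) x) => ?_
  have : 2/3 < f s x := hnest s (show 1/4 < f (s+1) x by linarith)
  exact show 1/3 ≤ f s x by linarith

theorem iInter_preimage_Ici_third_subset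
    (hname : ({a} : Set X) = ⋂ s, (f s) ⁻¹' Ioi (1/2 : ℝ))
    (hnest : ∀ s, (f (s+1)) ⁻¹' Ioi (1/4 : ℝ) ⊆ (f s) ⁻¹' Ioi (2/3 : ℝ)) :
    ⋂ s, (f s) ⁻¹' Ici (1/3 : ℝ) ⊆ {a} := by
  intro x hx
  rw [hname, mem_iInter]
  intro s
  have : 1/3 ≤ f (s+1) x := mem_iInter.1 hx (s+1)
  have : 2/3 < f s x := hnest s (show 1/4 < f (s+1) x by linarith)
  exact show 1/2 < f s x by linarith

end VectorName

theorem stmt0_general {X : Type*} [TopologicalSpace X] [CompactSpace X]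
    (f : ℕ → C(X, ℝ)) (a : X)
    (hrange : ∀ s, ∀ x, f s x ∈ Set.Icc (0:ℝ) 1)
    (hname : ({a} : Set X) = ⋂ s, (f s) ⁻¹' Set.Ioi (1/2 : ℝ))
    (hnest : ∀ s, (f (s+1)) ⁻¹' Set.Ioi (1/4 : ℝ) ⊆ (f s) ⁻¹' Set.Ioi (2/3 : ℝ))
    (hnorm : ∀ s, ‖f s‖ ≤ 2/3 + (1/2 : ℝ)^s)
    (g : C(X, ℝ)) (hg : ∀ x, g x ∈ Set.Icc (0:ℝ) 1) :
    ((∃ s, ‖f s * (1 - g)‖ < 1/3) ↔ g a > 1/2) ∧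
    (g a > 1/2 ↔ ∀ᶠ s in atTop, ‖f s * (1 - g)‖ < 1/3) := by
  have hhalf_of_exists : (∃ s, ‖f s * (1 - g)‖ < 1/3) → g a > 1/2 := fun ⟨s, hs⟩ =>
    ContinuousMap.gt_half_of_norm_mul_one_sub_lt_third
      (two_thirds_lt_apply_of_vectorName hname hnest s) hs
  have heventually_of_half (hga : g a > 1/2) : ∀ᶠ s in atTop, ‖f s * (1 - g)‖ < 1/3 := by
    set c : ℝ := (2 * g a + 1) / 3 with hc
    have hU : IsOpen {x | c * (1 - g x) < 1/3} :=
      isOpen_lt (by fun_prop) continuous_const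
    have haU : c * (1 - g a) < 1/3 := by rw [hc]; nlinarith
    have hsmall : ∀ᶠ s in atTop, (1/2 : ℝ)^s ≤ c - 2/3 :=
      (tendsto_pow_atTop_nhds_zero_of_lt_one (by norm_num) (by norm_num)).eventually_le_const
        (by rw [hc]; linarith)
    have hinside := (antitone_preimage_Ici_third hnest).eventually_subset_of_iInter_subset
      (fun s => isClosed_Ici.preimage (f s).continuous) hU
      ((iInter_preimage_Ici_third_subset hname hnest).trans (singleton_subset_iff.2 haU))
    filter_upwards [hsmall, hinside] with s hs hsU
    exact ContinuousMap.norm_mul_one_sub_lt (by norm_num) (fun x => (hrange s x).1)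
      (by linarith [hnorm s]) hg fun x hx => hsU hx
  exact ⟨⟨hhalf_of_exists, fun h => (heventually_of_half h).exists⟩,
    ⟨heventually_of_half, fun h => hhalf_of_exists h.exists⟩⟩

theorem stmt0 {X : Type*} [TopologicalSpace X] [CompactSpace X]
    [TopologicalSpace.MetrizableSpace X]
    (f : ℕ → C(X, ℝ)) (a : X)
    (hrange : ∀ s, ∀ x, f s x ∈ Set.Icc (0:ℝ) 1)
    (hname : ({a} : Set X) = ⋂ s, (f s) ⁻¹' Set.Ioi (1/2 : ℝ))
    (hnest : ∀ s, (f (s+1)) ⁻¹' Set.Ioi (1/4 : ℝ) ⊆ (f s) ⁻¹' Set.Ioi (2/3 : ℝ))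
    (hnorm : ∀ s, ‖f s‖ ≤ 2/3 + (1/2 : ℝ)^s)
    (g : C(X, ℝ)) (hg : ∀ x, g x ∈ Set.Icc (0:ℝ) 1) :
    ((∃ s, ‖f s * (1 - g)‖ < 1/3) ↔ g a > 1/2) ∧
    (g a > 1/2 ↔ ∀ᶠ s in atTop, ‖f s * (1 - g)‖ < 1/3) :=
  stmt0_general f a hrange hname hnest hnorm g hg
end

section
/- If (f_s) is a well structured vector name of a ∈ X and g ∈ C(X;[0,1]) satisfies g(a) > 1/2, then ‖f_s·(1−g)‖ < 1/3 for all sufficiently large s. -/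
/-!
Once `f s x ≤ 2/3`, the nesting condition forces `f m x ≤ 1/4` for every `m > s`. The open sets
`{f s < 2/3}` therefore increase with `s`, and they cover the compact set `{g ≤ c}` for any
`c < g a`, since that set misses `a`; hence `f s ≤ 1/4` on `{g ≤ c}` from some index on, and there
`f s · (1 - g) ≤ 1/4`. Off `{g ≤ c}`, taking `1/2 < c`, we have
`f s · (1 - g) ≤ (2/3 + 2⁻ˢ)(1 - c) < 1/3` for large `s`.
-/

open Set Filter

section NestedSuperlevelSets

variable {X : Type*} [TopologicalSpace X] {f : ℕ → C(X, ℝ)}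

theorem apply_succ_le_quarter
    (hnest : ∀ s, (f (s+1)) ⁻¹' Ioi (1/4 : ℝ) ⊆ (f s) ⁻¹' Ioi (2/3 : ℝ))
    {s : ℕ} {x : X} (hx : f s x ≤ 2/3) : f (s+1) x ≤ 1/4 :=
  le_of_not_gt fun h => hx.not_gt (hnest s h)

theorem apply_le_quarter_of_lt
    (hnest : ∀ s, (f (s+1)) ⁻¹' Ioi (1/4 : ℝ) ⊆ (f s) ⁻¹' Ioi (2/3 : ℝ))
    {s m : ℕ} {x : X} (hx : f s x ≤ 2/3) (hsm : s < m) : f m x ≤ 1/4 := by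
  induction m, hsm using Nat.le_induction with
  | base => exact apply_succ_le_quarter hnest hx
  | succ n _ ih => exact apply_succ_le_quarter hnest (ih.trans (by norm_num))

theorem eventually_forall_le_quarter_of_isCompact
    (hnest : ∀ s, (f (s+1)) ⁻¹' Ioi (1/4 : ℝ) ⊆ (f s) ⁻¹' Ioi (2/3 : ℝ))
    {K : Set X} (hK : IsCompact K) (hcover : ∀ x ∈ K, ∃ s, f s x < 2/3) :
    ∀ᶠ m in atTop, ∀ x ∈ K, f m x ≤ 1/4 := by
  have hmono : Monotone fun s => {x | f s x < 2/3} :=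
    monotone_nat_of_le_succ fun s _ hx =>
      (apply_succ_le_quarter hnest (le_of_lt hx)).trans_lt (by norm_num)
  obtain ⟨N, hN⟩ := hK.elim_directed_cover _
    (fun s => isOpen_lt (f s).continuous continuous_const)
    (fun x hx => mem_iUnion.2 (hcover x hx)) hmono.directed_le
  filter_upwards [eventually_gt_atTop N] with m hm x hx
  exact apply_le_quarter_of_lt hnest (le_of_lt (hN hx)) hm

end NestedSuperlevelSets

theorem abs_mul_one_sub_lt_third {u v c ε : ℝ} (hu : 0 ≤ u) (hv : v ∈ Icc (0 : ℝ) 1)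
    (hc : 1/2 < c) (huε : u ≤ 2/3 + ε) (hε : ε < 2/3 * (c - 1/2))
    (hsmall : v ≤ c → u ≤ 1/4) : |u * (1 - v)| < 1/3 := by
  obtain ⟨hv0, hv1⟩ := hv
  rw [abs_of_nonneg (mul_nonneg hu (by linarith))]
  rcases le_or_gt v c with hvc | hcv
  · nlinarith [hsmall hvc]
  · have h1c : 0 < 1 - c := by linarith
    calc u * (1 - v) ≤ (2/3 + ε) * (1 - c) := by gcongr; linarith
      _ < 1/3 := by nlinarith [mul_lt_mul_of_pos_right hε h1c]

theorem stmt2_general {X : Type*} [TopologicalSpace X] [CompactSpace X]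
    (f : ℕ → C(X, ℝ)) (a : X)
    (hrange : ∀ s, ∀ x, f s x ∈ Set.Icc (0:ℝ) 1)
    (hname : ({a} : Set X) = ⋂ s, (f s) ⁻¹' Set.Ioi (1/2 : ℝ))
    (hnest : ∀ s, (f (s+1)) ⁻¹' Set.Ioi (1/4 : ℝ) ⊆ (f s) ⁻¹' Set.Ioi (2/3 : ℝ))
    (hnorm : ∀ s, ‖f s‖ ≤ 2/3 + (1/2 : ℝ)^s)
    (g : C(X, ℝ)) (hg : ∀ x, g x ∈ Set.Icc (0:ℝ) 1)
    (h : g a > 1/2) :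
    ∀ᶠ s in atTop, ‖f s * (1 - g)‖ < 1/3 := by
  set c : ℝ := (1/2 + g a) / 2
  have hK : IsCompact {x | g x ≤ c} := (isClosed_le g.continuous continuous_const).isCompact
  have hcover : ∀ x ∈ {x | g x ≤ c}, ∃ s, f s x < 2/3 := by
    intro x hx
    have hxa : x ∉ ({a} : Set X) := by
      rintro rfl
      simp only [mem_ofPred_eq, c] at hx
      linarith
    simp only [hname, mem_iInter, mem_preimage, mem_Ioi, not_forall, not_lt] at hxa
    obtain ⟨s, hs⟩ := hxa
    exact ⟨s, by linarith⟩
  have htail : ∀ᶠ s : ℕ in atTop, (1/2 : ℝ)^s < 2/3 * (c - 1/2) :=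
    (tendsto_pow_atTop_nhds_zero_of_lt_one (by norm_num) (by norm_num)).eventually_lt_const
      (by simp only [c]; linarith)
  filter_upwards [eventually_forall_le_quarter_of_isCompact hnest hK hcover, htail]
    with s hsmall hε
  refine (ContinuousMap.norm_lt_iff _ (by norm_num)).2 fun x => ?_
  have hfx : f s x ≤ 2/3 + (1/2 : ℝ)^s :=
    ((le_abs_self _).trans ((f s).norm_coe_le_norm x)).trans (hnorm s)
  exact abs_mul_one_sub_lt_third (hrange s x).1 (hg x) (by simp only [c]; linarith) hfx hε
    (hsmall x)

theorem stmt2 {X : Type*} [TopologicalSpace X] [CompactSpace X]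
    [TopologicalSpace.MetrizableSpace X]
    (f : ℕ → C(X, ℝ)) (a : X)
    (hrange : ∀ s, ∀ x, f s x ∈ Set.Icc (0:ℝ) 1)
    (hname : ({a} : Set X) = ⋂ s, (f s) ⁻¹' Set.Ioi (1/2 : ℝ))
    (hnest : ∀ s, (f (s+1)) ⁻¹' Set.Ioi (1/4 : ℝ) ⊆ (f s) ⁻¹' Set.Ioi (2/3 : ℝ))
    (hnorm : ∀ s, ‖f s‖ ≤ 2/3 + (1/2 : ℝ)^s)
    (g : C(X, ℝ)) (hg : ∀ x, g x ∈ Set.Icc (0:ℝ) 1)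
    (h : g a > 1/2) :
    ∀ᶠ s in atTop, ‖f s * (1 - g)‖ < 1/3 :=
  stmt2_general f a hrange hname hnest hnorm g hg h
end

section
/- Let X be a compact metrizable space, let δ₀ = (1 − 2^{-1/2})/2, and let v, v₀ ∈ C(X;ℂ). If ‖v² − v‖ < 2^{-(2k+1)}, ‖v − v₀‖ < δ₀, ‖v₀ − 1‖ < δ₀, and 2^{-(2k+1)/2} < 2^{-k}, then ‖v − 1‖ < 2^{-k}. -/
theorem stmt11 {X : Type*} [TopologicalSpace X] [CompactSpace X]
    [TopologicalSpace.MetrizableSpace X]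
    (k : ℕ) (δ₀ : ℝ) (hδ₀ : δ₀ = (1 - (2:ℝ)^(-(1/2 : ℝ))) / 2)
    (v v₀ : C(X, ℂ))
    (h0 : ‖v₀ - 1‖ < δ₀)
    (h1 : ‖v - v₀‖ < δ₀)
    (h2 : ‖v^2 - v‖ < (1/2 : ℝ)^(2*k + 1))
    (h3 : Real.sqrt ((1/2 : ℝ)^(2*k + 1)) < (1/2 : ℝ)^k) :
    ‖v - 1‖ < (1/2 : ℝ)^k := by
  have hs : (2:ℝ)^(-(1/2 : ℝ)) = (Real.sqrt 2)⁻¹ := by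
    rw [Real.rpow_neg (by norm_num), Real.sqrt_eq_rpow]
  have hsq : Real.sqrt 2 ^ 2 = 2 := Real.sq_sqrt (by norm_num)
  have hs1 : (1:ℝ) < Real.sqrt 2 := by nlinarith [Real.sqrt_nonneg 2]
  have hs0 : (0:ℝ) < Real.sqrt 2 := by linarith
  have hN0 : (0:ℝ) ≤ ‖v^2 - v‖ := norm_nonneg _
  have key : ∀ t : X, ‖(v - 1) t‖ ≤ Real.sqrt 2 * ‖v^2 - v‖ := by
    intro t
    have e1 : (v - 1) t = v t - 1 := by simp
    have b1 : ‖v t - v₀ t‖ ≤ ‖v - v₀‖ := by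
      have := ContinuousMap.norm_coe_le_norm (v - v₀) t
      simpa using this
    have b2 : ‖v₀ t - 1‖ ≤ ‖v₀ - 1‖ := by
      have := ContinuousMap.norm_coe_le_norm (v₀ - 1) t
      simpa using this
    have hb : ‖v t - 1‖ < 1 - (Real.sqrt 2)⁻¹ := by
      have htri := norm_sub_le_norm_sub_add_norm_sub (v t) (v₀ t) (1:ℂ)
      rw [hδ₀, hs] at h0 h1
      linarith
    have ha : (Real.sqrt 2)⁻¹ ≤ ‖v t‖ := by
      have h := norm_sub_norm_le (1:ℂ) (v t)
      rw [norm_one, norm_sub_rev] at h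
      linarith
    have hm : ‖v t‖ * ‖v t - 1‖ ≤ ‖v^2 - v‖ := by
      have := ContinuousMap.norm_coe_le_norm (v^2 - v) t
      have e2 : (v^2 - v) t = v t * (v t - 1) := by
        simp [pow_two]; ring
      rw [e2, norm_mul] at this
      exact this
    rw [e1]
    have hinv : (0:ℝ) < (Real.sqrt 2)⁻¹ := by positivity
    have h4 : (Real.sqrt 2)⁻¹ * ‖v t - 1‖ ≤ ‖v^2 - v‖ :=
      le_trans (mul_le_mul_of_nonneg_right ha (norm_nonneg _)) hm
    have : ‖v t - 1‖ ≤ Real.sqrt 2 * ((Real.sqrt 2)⁻¹ * ‖v t - 1‖) := by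
      rw [← mul_assoc, mul_inv_cancel₀ (ne_of_gt hs0), one_mul]
    nlinarith
  have hle : ‖v - 1‖ ≤ Real.sqrt 2 * ‖v^2 - v‖ :=
    ContinuousMap.norm_le _ (by positivity) |>.mpr key
  have hp0 : (0:ℝ) < (1/2:ℝ)^k := by positivity
  have hp1 : (1/2:ℝ)^k ≤ 1 := pow_le_one₀ (by norm_num) (by norm_num)
  have hε : (1/2:ℝ)^(2*k+1) = ((1/2:ℝ)^k)^2 * (1/2) := by
    rw [pow_succ, two_mul, pow_add]; ring
  have hfin : Real.sqrt 2 * ((1/2:ℝ)^(2*k+1)) ≤ (1/2:ℝ)^k := by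
    rw [hε]; nlinarith
  calc ‖v - 1‖ ≤ Real.sqrt 2 * ‖v^2 - v‖ := hle
    _ < Real.sqrt 2 * ((1/2:ℝ)^(2*k+1)) := by
        exact mul_lt_mul_of_pos_left h2 hs0
    _ ≤ (1/2:ℝ)^k := hfin
end
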